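/- arXiv:2510.20199 — 2 statements merged into one kernel-verified Lean document; each statement's English description precedes it below -/
import Mathlib

section
/- Let (Ω, 𝔉) be a measurable space, γ ∈ (0,1), and for each τ ∈ ℕ let p_τ be a probability measure on Ω. Let r_0, r_1, …, r_m : Ω → ℝ be bounded measurable functions, β_0, β_1, …, β_m > 0, and λ = (λ_1, …, λ_m) with λ_i ≥ 0. For t = (t_0, …, t_m) ∈ ℝ^{m+1} define L(t) = Σ_{τ=0}^∞ γ^τ [ ∫ (t_0 − (1/β_0)(t_0 − r_0)_+) dp_τ + Σ_{i=1}^m λ_i ∫ (t_i − (1/β_i)(t_i − r_i)_+) dp_τ ], where (x)_+ = max(x,0). Then for all t̃, t̄ ∈ ℝ^{m+1}, |L(t̃) − L(t̄)| ≤ (1−γ)^{-1} √( (1 + 1/β_0)² + Σ_{i=1}^m λ_i² (1 + 1/β_i)² ) · ‖t̃ − t̄‖₂. -/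
/-!
Each CVaR-adjusted reward `t - (1/β)(t - r)₊` is `(1 + 1/β)`-Lipschitz in `t`, pointwise in `r`,
hence so is its expectation under every `p_τ`. The per-step Lagrangian is a nonnegatively weighted
sum of these, one coordinate of `t` each, so by Cauchy–Schwarz it is Lipschitz for the Euclidean
norm with constant `√((1 + 1/β₀)² + Σᵢ λᵢ² (1 + 1/βᵢ)²)`; discounting multiplies the constant by
`Σ_τ γ^τ = (1 - γ)⁻¹`.
-/

open MeasureTheory Finset

-- Here and in the next lemma nothing is assumed to converge: at bounded distance, `f` and `g`
-- are integrable together, and otherwise both integrals are the junk value `0`.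
theorem abs_integral_sub_integral_le {Ω : Type*} [MeasurableSpace Ω] {μ : Measure Ω}
    [IsProbabilityMeasure μ] {f g : Ω → ℝ} {C : ℝ} (hf : AEStronglyMeasurable f μ)
    (hg : AEStronglyMeasurable g μ) (hfg : ∀ᵐ ω ∂μ, |f ω - g ω| ≤ C) :
    |∫ ω, f ω ∂μ - ∫ ω, g ω ∂μ| ≤ C := by
  have hdiff : Integrable (f - g) μ := .of_bound (hf.sub hg) C hfg
  by_cases hfi : Integrable f μ
  · have hgi : Integrable g μ := by simpa using hfi.sub hdiff
    rw [← integral_sub hfi hgi]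
    simpa using norm_integral_le_of_norm_le_const (f := f - g) hfg
  · have hgi : ¬ Integrable g μ := fun hgi ↦ hfi (by simpa using hgi.add hdiff)
    obtain ⟨ω, hω⟩ := hfg.exists
    simpa [integral_undef hfi, integral_undef hgi] using (abs_nonneg _).trans hω

theorem abs_tsum_geometric_mul_sub_le {γ D : ℝ} (hγ₀ : 0 ≤ γ) (hγ₁ : γ < 1) {u v : ℕ → ℝ}
    (huv : ∀ τ, |u τ - v τ| ≤ D) :
    |∑' τ, γ ^ τ * u τ - ∑' τ, γ ^ τ * v τ| ≤ (1 - γ)⁻¹ * D := by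
  have hdom : HasSum (fun τ ↦ γ ^ τ * D) ((1 - γ)⁻¹ * D) :=
    (hasSum_geometric_of_lt_one hγ₀ hγ₁).mul_right D
  have hterm : ∀ τ, ‖γ ^ τ * (u τ - v τ)‖ ≤ γ ^ τ * D := fun τ ↦ by
    rw [Real.norm_eq_abs, abs_mul, abs_of_nonneg (pow_nonneg hγ₀ τ)]
    exact mul_le_mul_of_nonneg_left (huv τ) (pow_nonneg hγ₀ τ)
  have hdiff : Summable (fun τ ↦ γ ^ τ * (u τ - v τ)) := .of_norm_bounded hdom.summable hterm
  by_cases hv : Summable (fun τ ↦ γ ^ τ * v τ)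
  · have hu : Summable (fun τ ↦ γ ^ τ * u τ) := by simpa [mul_sub] using hdiff.add hv
    rw [← hu.tsum_sub hv]
    simpa [mul_sub] using tsum_of_norm_bounded hdom hterm
  · have hu : ¬ Summable (fun τ ↦ γ ^ τ * u τ) := fun hu ↦ hv (by simpa [mul_sub] using hu.sub hdiff)
    rw [tsum_eq_zero_of_not_summable hu, tsum_eq_zero_of_not_summable hv, sub_zero, abs_zero]
    exact hdom.nonneg fun τ ↦ (norm_nonneg _).trans (hterm τ)

theorem abs_weighted_sum_sub_le {ι : Type*} [Fintype ι] {w ℓ : ι → ℝ} (hw : ∀ i, 0 ≤ w i)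
    {φ : ι → ℝ → ℝ} (hφ : ∀ i a b, |φ i a - φ i b| ≤ ℓ i * |a - b|) (x y : ι → ℝ) :
    |∑ i, w i * φ i (x i) - ∑ i, w i * φ i (y i)|
      ≤ √(∑ i, (w i * ℓ i) ^ 2) * √(∑ i, (x i - y i) ^ 2) :=
  calc |∑ i, w i * φ i (x i) - ∑ i, w i * φ i (y i)|
      = |∑ i, w i * (φ i (x i) - φ i (y i))| := by simp only [mul_sub, sum_sub_distrib]
    _ ≤ ∑ i, w i * |φ i (x i) - φ i (y i)| := by
        refine (abs_sum_le_sum_abs _ _).trans_eq (sum_congr rfl fun i _ ↦ ?_)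
        rw [abs_mul, abs_of_nonneg (hw i)]
    _ ≤ ∑ i, (w i * ℓ i) * |x i - y i| := by
        refine sum_le_sum fun i _ ↦ ?_
        rw [mul_assoc]
        exact mul_le_mul_of_nonneg_left (hφ i _ _) (hw i)
    _ ≤ √(∑ i, (w i * ℓ i) ^ 2) * √(∑ i, |x i - y i| ^ 2) := Real.sum_mul_le_sqrt_mul_sqrt _ _ _
    _ = √(∑ i, (w i * ℓ i) ^ 2) * √(∑ i, (x i - y i) ^ 2) := by simp only [sq_abs]

theorem abs_cvar_reward_sub_le {β : ℝ} (hβ : 0 ≤ β) (a b x : ℝ) :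
    |(a - 1 / β * max (a - x) 0) - (b - 1 / β * max (b - x) 0)| ≤ (1 + 1 / β) * |a - b| := by
  have hβ' : 0 ≤ 1 / β := one_div_nonneg.2 hβ
  have hmax : |max (a - x) 0 - max (b - x) 0| ≤ |a - b| :=
    (abs_max_sub_max_le_abs _ _ _).trans_eq (by ring_nf)
  calc |(a - 1 / β * max (a - x) 0) - (b - 1 / β * max (b - x) 0)|
      = |(a - b) - 1 / β * (max (a - x) 0 - max (b - x) 0)| := by ring_nf
    _ ≤ |a - b| + 1 / β * |max (a - x) 0 - max (b - x) 0| := by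
        rw [← abs_of_nonneg hβ', ← abs_mul, abs_of_nonneg hβ']
        exact abs_sub _ _
    _ ≤ (1 + 1 / β) * |a - b| := by nlinarith

theorem abs_integral_cvar_reward_sub_le {Ω : Type*} [MeasurableSpace Ω] {μ : Measure Ω}
    [IsProbabilityMeasure μ] {r : Ω → ℝ} (hr : Measurable r) {β : ℝ} (hβ : 0 ≤ β) (a b : ℝ) :
    |∫ ω, (a - 1 / β * max (a - r ω) 0) ∂μ - ∫ ω, (b - 1 / β * max (b - r ω) 0) ∂μ|
      ≤ (1 + 1 / β) * |a - b| :=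
  abs_integral_sub_integral_le (by fun_prop) (by fun_prop)
    (ae_of_all _ fun ω ↦ abs_cvar_reward_sub_le hβ a b (r ω))

theorem lagrangian_lipschitz_in_t_general
    {Ω : Type*} [MeasurableSpace Ω] {m : ℕ}
    (γ : ℝ) (hγ : γ ∈ Set.Ioo (0:ℝ) 1)
    (p : ℕ → Measure Ω) (hp : ∀ τ, IsProbabilityMeasure (p τ))
    (r : Fin (m+1) → Ω → ℝ)
    (hrm : ∀ i, Measurable (r i))
    (β : Fin (m+1) → ℝ) (hβ : ∀ i, 0 < β i)
    (lam : Fin m → ℝ) (hlam : ∀ i, 0 ≤ lam i)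
    (L : (Fin (m+1) → ℝ) → ℝ)
    (hL : ∀ t : Fin (m+1) → ℝ,
      L t = ∑' τ : ℕ, γ ^ τ *
        ((∫ ω, (t 0 - (1 / β 0) * max (t 0 - r 0 ω) 0) ∂(p τ))
          + ∑ i : Fin m, lam i *
              ∫ ω, (t i.succ - (1 / β i.succ) * max (t i.succ - r i.succ ω) 0) ∂(p τ))) :
    ∀ t₁ t₂ : Fin (m+1) → ℝ,
      |L t₁ - L t₂|
        ≤ (1 - γ)⁻¹ *
            Real.sqrt ((1 + 1 / β 0) ^ 2
              + ∑ i : Fin m, (lam i) ^ 2 * (1 + 1 / β i.succ) ^ 2) *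
            Real.sqrt (∑ j : Fin (m+1), (t₁ j - t₂ j) ^ 2) := by
  intro t₁ t₂
  rw [hL t₁, hL t₂, mul_assoc ((1 - γ)⁻¹)]
  refine abs_tsum_geometric_mul_sub_le hγ.1.le hγ.2 fun τ ↦ ?_
  have hweight : ∀ j, 0 ≤ (Fin.cons 1 lam : Fin (m+1) → ℝ) j := Fin.cases zero_le_one hlam
  have hstep := abs_weighted_sum_sub_le hweight
    (φ := fun j a ↦ ∫ ω, (a - 1 / β j * max (a - r j ω) 0) ∂(p τ))
    (fun j ↦ abs_integral_cvar_reward_sub_le (hrm j) (hβ j).le) t₁ t₂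
  simpa [Fin.sum_univ_succ, mul_pow] using hstep

/-- the Lagrangian of the risk-constrained RL problem (for a fixed policy),
viewed as a function of the OCE auxiliary vector `t ∈ ℝ^{m+1}`, is Lipschitz with
constant `(1-γ)⁻¹ √((1+1/β₀)² + Σᵢ λᵢ²(1+1/βᵢ)²)` (Euclidean norm on `t`). -/
theorem lagrangian_lipschitz_in_t
    {Ω : Type*} [MeasurableSpace Ω] {m : ℕ}
    (γ : ℝ) (hγ : γ ∈ Set.Ioo (0:ℝ) 1)
    (p : ℕ → Measure Ω) (hp : ∀ τ, IsProbabilityMeasure (p τ))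
    (r : Fin (m+1) → Ω → ℝ)
    (hrm : ∀ i, Measurable (r i))
    (hrb : ∀ i, ∃ M : ℝ, ∀ ω, |r i ω| ≤ M)
    (β : Fin (m+1) → ℝ) (hβ : ∀ i, 0 < β i)
    (lam : Fin m → ℝ) (hlam : ∀ i, 0 ≤ lam i)
    (L : (Fin (m+1) → ℝ) → ℝ)
    (hL : ∀ t : Fin (m+1) → ℝ,
      L t = ∑' τ : ℕ, γ ^ τ *
        ((∫ ω, (t 0 - (1 / β 0) * max (t 0 - r 0 ω) 0) ∂(p τ))
          + ∑ i : Fin m, lam i *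
              ∫ ω, (t i.succ - (1 / β i.succ) * max (t i.succ - r i.succ ω) 0) ∂(p τ))) :
    ∀ t₁ t₂ : Fin (m+1) → ℝ,
      |L t₁ - L t₂|
        ≤ (1 - γ)⁻¹ *
            Real.sqrt ((1 + 1 / β 0) ^ 2
              + ∑ i : Fin m, (lam i) ^ 2 * (1 + 1 / β i.succ) ^ 2) *
            Real.sqrt (∑ j : Fin (m+1), (t₁ j - t₂ j) ^ 2) :=
  lagrangian_lipschitz_in_t_general γ hγ p hp r hrm β hβ lam hlam L hL
end

section
/- Let (Ω, 𝔉, μ) be a probability space and let Z : Ω → ℝ be measurable with a ≤ Z ≤ b μ-almost everywhere for some a, b ∈ ℝ. For β ∈ (0,1) define ρ(β) = sup_{t ∈ ℝ} ( t − (1/β)∫(t − Z)_+ dμ ), where (x)_+ = max(x,0). Then ρ(β) tends to essInf Z (the μ-essential infimum of Z) as β tends to 0 from the right: lim_{β → 0⁺} ρ(β) = essInf Z. -/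
open MeasureTheory Filter

/-! The objective `t ↦ t - β⁻¹ 𝔼[(t - Z)₊]` equals `essInf Z` at `t = essInf Z`, since `(t - Z)₊`
vanishes almost everywhere there, so `ρ(β) ≥ essInf Z`. Conversely, for any level `c`, each
`t > c` pays at least `(t - c) · μ{Z < c} / β` in the penalty term, so `ρ(β) ≤ c` as soon as
`β ≤ μ{Z < c}`; for `c > essInf Z` this probability is positive. -/

section

variable {Ω : Type*} [MeasurableSpace Ω] {μ : Measure Ω} {Z : Ω → ℝ}

lemma isCoboundedUnder_ge_ae [NeZero μ] (f : Ω → ℝ) : IsCoboundedUnder (· ≥ ·) (ae μ) f := by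
  suffices ∃ n : ℕ, ∃ᵐ ω ∂μ, f ω ≤ n from
    let ⟨_, hn⟩ := this; .of_frequently_le hn
  by_contra! h
  obtain ⟨ω, hω⟩ := (ae_all_iff.2 h).exists
  obtain ⟨n, hn⟩ := exists_nat_ge (f ω)
  exact (hω n).not_ge hn

lemma measure_lt_ne_zero_of_essInf_lt [NeZero μ] {c : ℝ} (hc : essInf Z μ < c) :
    μ {ω | Z ω < c} ≠ 0 := by
  intro h
  have hcZ : ∀ᵐ ω ∂μ, c ≤ Z ω := by
    simpa only [ae_iff, not_le] using h
  exact hc.not_ge (le_essInf_of_ae_le c hcZ (isCoboundedUnder_ge_ae Z))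

lemma integrable_max_sub_zero [IsFiniteMeasure μ] (hZm : AEMeasurable Z μ) {a : ℝ}
    (ha : ∀ᵐ ω ∂μ, a ≤ Z ω) (t : ℝ) : Integrable (fun ω => max (t - Z ω) 0) μ := by
  refine (integrable_const (max (t - a) 0)).mono'
    ((aemeasurable_const.sub hZm).max aemeasurable_const).aestronglyMeasurable ?_
  filter_upwards [ha] with ω hω
  rw [Real.norm_of_nonneg (le_max_right _ _)]
  exact max_le_max_right 0 (by linarith)

lemma integral_max_essInf_sub_eq_zero (hZ : IsBoundedUnder (· ≥ ·) (ae μ) Z) :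
    ∫ ω, max (essInf Z μ - Z ω) 0 ∂μ = 0 := by
  refine integral_eq_zero_of_ae ?_
  filter_upwards [ae_essInf_le hZ] with ω hω
  exact max_eq_right (sub_nonpos.2 hω)

lemma mul_measureReal_lt_le_integral_max_sub [IsFiniteMeasure μ] {c t : ℝ} (hct : c ≤ t)
    (hint : Integrable (fun ω => max (t - Z ω) 0) μ) :
    (t - c) * μ.real {ω | Z ω < c} ≤ ∫ ω, max (t - Z ω) 0 ∂μ := by
  have hsub : {ω | Z ω < c} ⊆ {ω | t - c ≤ max (t - Z ω) 0} := fun ω hω =>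
    le_max_of_le_left (sub_le_sub_left (le_of_lt hω) t)
  calc (t - c) * μ.real {ω | Z ω < c}
      ≤ (t - c) * μ.real {ω | t - c ≤ max (t - Z ω) 0} :=
        mul_le_mul_of_nonneg_left (measureReal_mono hsub) (sub_nonneg.2 hct)
    _ ≤ ∫ ω, max (t - Z ω) 0 ∂μ :=
        mul_meas_ge_le_integral_of_nonneg (ae_of_all _ fun _ => le_max_right _ _) hint _

variable (μ Z)

noncomputable def oceObjective (β t : ℝ) : ℝ := t - (1 / β) * ∫ ω, max (t - Z ω) 0 ∂μ

noncomputable def reflectedCVaR (β : ℝ) : ℝ := ⨆ t : ℝ, oceObjective μ Z β t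

variable {μ Z}

lemma oceObjective_le_of_le_measureReal [IsFiniteMeasure μ]
    (hint : ∀ t, Integrable (fun ω => max (t - Z ω) 0) μ) {β c : ℝ} (hβ : 0 < β)
    (hβc : β ≤ μ.real {ω | Z ω < c}) (t : ℝ) : oceObjective μ Z β t ≤ c := by
  have hI : 0 ≤ ∫ ω, max (t - Z ω) 0 ∂μ := integral_nonneg fun _ => le_max_right _ _
  rw [oceObjective, one_div, ← div_eq_inv_mul]
  rcases le_total t c with htc | hct
  · linarith [div_nonneg hI hβ.le]
  · have : (t - c) * β ≤ ∫ ω, max (t - Z ω) 0 ∂μ :=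
      (mul_le_mul_of_nonneg_left hβc (sub_nonneg.2 hct)).trans
        (mul_measureReal_lt_le_integral_max_sub hct (hint t))
    linarith [(le_div_iff₀ hβ).2 this]

lemma reflectedCVaR_mem_Icc [IsFiniteMeasure μ] (hZ : IsBoundedUnder (· ≥ ·) (ae μ) Z)
    (hint : ∀ t, Integrable (fun ω => max (t - Z ω) 0) μ) {β c : ℝ} (hβ : 0 < β)
    (hβc : β ≤ μ.real {ω | Z ω < c}) :
    reflectedCVaR μ Z β ∈ Set.Icc (essInf Z μ) c := by
  have hle := oceObjective_le_of_le_measureReal hint hβ hβc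
  refine ⟨?_, ciSup_le hle⟩
  calc essInf Z μ = oceObjective μ Z β (essInf Z μ) := by
        rw [oceObjective, integral_max_essInf_sub_eq_zero hZ, mul_zero, sub_zero]
    _ ≤ reflectedCVaR μ Z β := le_ciSup ⟨c, Set.forall_mem_range.2 hle⟩ _

lemma eventually_reflectedCVaR_mem_Icc [IsFiniteMeasure μ] [NeZero μ]
    (hZ : IsBoundedUnder (· ≥ ·) (ae μ) Z)
    (hint : ∀ t, Integrable (fun ω => max (t - Z ω) 0) μ) {c : ℝ} (hc : essInf Z μ < c) :
    ∀ᶠ β in nhdsWithin 0 (Set.Ioi 0), reflectedCVaR μ Z β ∈ Set.Icc (essInf Z μ) c := by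
  have hp : 0 < μ.real {ω | Z ω < c} :=
    ENNReal.toReal_pos (measure_lt_ne_zero_of_essInf_lt hc) (measure_ne_top μ _)
  filter_upwards [Ioc_mem_nhdsGT hp] with β hβ
  exact reflectedCVaR_mem_Icc hZ hint hβ.1 hβ.2

end

theorem oce_tendsto_essInf_general
    {Ω : Type*} [MeasurableSpace Ω] (μ : Measure Ω) [IsProbabilityMeasure μ]
    (Z : Ω → ℝ) (hZm : Measurable Z)
    (a : ℝ) (ha : ∀ᵐ ω ∂μ, a ≤ Z ω) :
    Tendsto (fun β : ℝ => ⨆ t : ℝ, (t - (1/β) * ∫ ω, max (t - Z ω) 0 ∂μ))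
      (nhdsWithin 0 (Set.Ioi 0)) (nhds (essInf Z μ)) := by
  have hZ : IsBoundedUnder (· ≥ ·) (ae μ) Z := ⟨a, ha⟩
  have hint := integrable_max_sub_zero hZm.aemeasurable ha
  change Tendsto (reflectedCVaR μ Z) _ _
  refine tendsto_order.2 ⟨fun x hx => ?_, fun y hy => ?_⟩
  · filter_upwards [eventually_reflectedCVaR_mem_Icc hZ hint (lt_add_one _)] with β hβ
    exact hx.trans_le hβ.1
  · obtain ⟨c, hmc, hcy⟩ := exists_between hy
    filter_upwards [eventually_reflectedCVaR_mem_Icc hZ hint hmc] with β hβ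
    exact hβ.2.trans_lt hcy

/-- as `β → 0⁺`, the reflected CVaR (supremal-convolution OCE) of a bounded
measurable reward `Z` converges to the essential infimum of `Z`. -/
theorem oce_tendsto_essInf
    {Ω : Type*} [MeasurableSpace Ω] (μ : Measure Ω) [IsProbabilityMeasure μ]
    (Z : Ω → ℝ) (hZm : Measurable Z)
    (a b : ℝ) (ha : ∀ᵐ ω ∂μ, a ≤ Z ω) (hb : ∀ᵐ ω ∂μ, Z ω ≤ b) :
    Tendsto (fun β : ℝ => ⨆ t : ℝ, (t - (1/β) * ∫ ω, max (t - Z ω) 0 ∂μ))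
      (nhdsWithin 0 (Set.Ioi 0)) (nhds (essInf Z μ)) :=
  oce_tendsto_essInf_general μ Z hZm a ha
end
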